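/- arXiv:2003.10054 — 3 statements merged into one kernel-verified Lean document; each statement's English description precedes it below -/
import Mathlib

section
/- Let n be a positive integer, let φ : ℝ → Matrix (Fin n) (Fin n) ℂ be continuous with φ(t) skew-Hermitian for every t, and let g : ℝ → Matrix (Fin n) (Fin n) ℂ be differentiable with derivative satisfying g′(t) = −g(t) · φ(t) for all t. If g(0) is unitary (g(0) · g(0)ᴴ = 1 and g(0)ᴴ · g(0) = 1), then g(t) is unitary for every t ∈ ℝ. -/
/-!
Along a solution of `g' = -g φ` with `φ` skew-Hermitian, the product rule gives
`(g gᴴ)' = -g φ gᴴ - g φᴴ gᴴ = -g (φ + φᴴ) gᴴ = 0`, so `g gᴴ` is constant, equal to `g 0 (g 0)ᴴ = 1`.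
For square matrices a one-sided inverse is two-sided.
-/

open Matrix

attribute [local instance] Matrix.normedAddCommGroup Matrix.normedSpace

section MatrixDeriv

variable {𝕜 : Type*} [NontriviallyNormedField 𝕜] {𝔸 : Type*} [NormedRing 𝔸] [NormedAlgebra 𝕜 𝔸]
  {l m n : Type*} {x : 𝕜}

theorem Matrix.hasDerivAt_iff_forall_apply [Fintype n] {f : 𝕜 → Matrix m n 𝔸} {f' : Matrix m n 𝔸} :
    HasDerivAt f f' x ↔ ∀ i j, HasDerivAt (fun t => f t i j) (f' i j) x :=
  hasDerivAt_pi.trans (forall_congr' fun _ => hasDerivAt_pi)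

theorem HasDerivAt.matrix_mul [Fintype m] [Fintype n] {f : 𝕜 → Matrix l m 𝔸} {g : 𝕜 → Matrix m n 𝔸}
    {f' : Matrix l m 𝔸} {g' : Matrix m n 𝔸} (hf : HasDerivAt f f' x) (hg : HasDerivAt g g' x) :
    HasDerivAt (fun t => f t * g t) (f' * g x + f x * g') x := by
  refine Matrix.hasDerivAt_iff_forall_apply.2 fun i k => ?_
  simp only [mul_apply, Matrix.add_apply, ← Finset.sum_add_distrib]
  exact HasDerivAt.fun_sum fun j _ =>
    (Matrix.hasDerivAt_iff_forall_apply.1 hf i j).mul (Matrix.hasDerivAt_iff_forall_apply.1 hg j k)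

end MatrixDeriv

section RCLike

variable {𝕜 : Type*} [RCLike 𝕜] {m n : Type*} {x : ℝ}

theorem HasDerivAt.matrix_conjTranspose [Fintype m] [Fintype n] {f : ℝ → Matrix m n 𝕜}
    {f' : Matrix m n 𝕜} (hf : HasDerivAt f f' x) : HasDerivAt (fun t => (f t)ᴴ) f'ᴴ x :=
  Matrix.hasDerivAt_iff_forall_apply.2 fun i j => (Matrix.hasDerivAt_iff_forall_apply.1 hf j i).star

theorem HasDerivAt.mul_conjTranspose_eq_zero [Fintype m] [Fintype n] {g : ℝ → Matrix m n 𝕜}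
    {A : Matrix n n 𝕜} (hA : Aᴴ = -A) (hg : HasDerivAt g (-(g x * A)) x) :
    HasDerivAt (fun t => g t * (g t)ᴴ) 0 x := by
  convert hg.matrix_mul hg.matrix_conjTranspose using 1
  rw [conjTranspose_neg, conjTranspose_mul, hA, Matrix.neg_mul, Matrix.neg_mul, neg_neg,
    Matrix.mul_assoc, neg_add_cancel]

end RCLike

theorem gauge_transformation_unitary_general (n : ℕ)
    (φ g : ℝ → Matrix (Fin n) (Fin n) ℂ)
    (hφ : ∀ t, (φ t)ᴴ = -(φ t))
    (hdiff : Differentiable ℝ g)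
    (hderiv : ∀ t, deriv g t = -(g t * φ t))
    (hg0 : g 0 * (g 0)ᴴ = 1 ∧ (g 0)ᴴ * g 0 = 1) :
    ∀ t : ℝ, g t * (g t)ᴴ = 1 ∧ (g t)ᴴ * g t = 1 := by
  have hgg : ∀ t, HasDerivAt (fun s => g s * (g s)ᴴ) 0 t := fun t =>
    HasDerivAt.mul_conjTranspose_eq_zero (hφ t) (hderiv t ▸ (hdiff t).hasDerivAt)
  intro t
  have hconst : g t * (g t)ᴴ = g 0 * (g 0)ᴴ :=
    is_const_of_deriv_eq_zero (fun s => (hgg s).differentiableAt) (fun s => (hgg s).deriv) t 0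
  have hunit : g t * (g t)ᴴ = 1 := hconst.trans hg0.1
  exact ⟨hunit, mul_eq_one_comm.mp hunit⟩

/-- If φ is continuous with skew-Hermitian values, g is differentiable with
g′(t) = −g(t)·φ(t), and g(0) is unitary, then g(t) is unitary for all t. -/
theorem gauge_transformation_unitary (n : ℕ) (hn : 0 < n)
    (φ g : ℝ → Matrix (Fin n) (Fin n) ℂ)
    (hφcont : Continuous φ) (hφ : ∀ t, (φ t)ᴴ = -(φ t))
    (hdiff : Differentiable ℝ g)
    (hderiv : ∀ t, deriv g t = -(g t * φ t))
    (hg0 : g 0 * (g 0)ᴴ = 1 ∧ (g 0)ᴴ * g 0 = 1) :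
    ∀ t : ℝ, g t * (g t)ᴴ = 1 ∧ (g t)ᴴ * g t = 1 :=
  gauge_transformation_unitary_general n φ g hφ hdiff hderiv hg0
end

section
/- Let V be a finite-dimensional real vector space, g a real Lie algebra, and k, l, p natural numbers. For every alternating k-linear map u, alternating l-linear map v, and alternating p-linear map w from V to g, the graded Jacobi identity [[u ∧ v] ∧ w] + (−1)^{kl} [v ∧ [u ∧ w]] = [u ∧ [v ∧ w]] holds as an equality of alternating (k+l+p)-linear maps from V to g, with all index types identified with Fin (k+l+p) along the canonical equivalences. -/
open scoped TensorProduct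

/-- The bilinear map `g -> g -> g` given by the Lie bracket. -/
noncomputable def bracketBilin (g : Type*) [LieRing g] [LieAlgebra ℝ g] :
    g →ₗ[ℝ] g →ₗ[ℝ] g :=
  LinearMap.mk₂ ℝ (fun ξ η : g => ⁅ξ, η⁆)
    (fun _ _ _ => add_lie _ _ _)
    (fun _ _ _ => smul_lie _ _ _)
    (fun _ _ _ => lie_add _ _ _)
    (fun _ _ _ => lie_smul _ _ _)

/-- The bracket-wedge `[u ∧ v]` of Lie algebra-valued alternating forms, obtained by
composing the linear map induced by the Lie bracket with the domain coproduct
`u.domCoprod v`, reindexed from `Fin k ⊕ Fin l` to `Fin (k + l)` along the canonical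
equivalence. -/
noncomputable def bwedge {V g : Type*} [AddCommGroup V] [Module ℝ V]
    [LieRing g] [LieAlgebra ℝ g] {k l : ℕ}
    (u : AlternatingMap ℝ V g (Fin k)) (v : AlternatingMap ℝ V g (Fin l)) :
    AlternatingMap ℝ V g (Fin (k + l)) :=
  ((TensorProduct.lift (bracketBilin g)).compAlternatingMap
    (u.domCoprod v)).domDomCongr finSumFinEquiv


/-!
Over `ℝ` every alternating map is an alternatization (`u = alt (u / k!)`), and by
`MultilinearMap.domCoprod_alternization` the bracket-wedge of two alternatizations is the
alternatization of the pointwise bracket `x ↦ ⁅a (x ∘ inl), b (x ∘ inr)⁆`. Hence all three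
terms are alternatizations of iterated pointwise brackets, which satisfy the ordinary Jacobi
identity. Reindexing the middle term moves the block of `v` in front of the block of `u`; this
block swap is the rotation `finRotate (k + l) ^ l`, whose sign is `(-1) ^ (k * l)`.
-/

open MultilinearMap (alternatization)

namespace MultilinearMap

variable {R M N ι κ : Type*} [Semiring R] [AddCommMonoid M] [Module R M] [AddCommGroup N]
  [Module R N] [Fintype ι] [DecidableEq ι] [Fintype κ] [DecidableEq κ]

theorem alternatization_domDomCongr (e : ι ≃ κ) (f : MultilinearMap R (fun _ : ι => M) N) :
    alternatization (f.domDomCongr e) = (alternatization f).domDomCongr e := by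
  ext v
  simp only [alternatization_apply, AlternatingMap.domDomCongr_apply, domDomCongr_apply]
  rw [← Equiv.sum_comp (Equiv.permCongr e)]
  refine Finset.sum_congr rfl fun σ _ => ?_
  simp [Equiv.Perm.sign_permCongr, Equiv.permCongr_apply]

end MultilinearMap

theorem AlternatingMap.exists_alternatization_eq {K M N ι : Type*} [Field K] [CharZero K]
    [AddCommGroup M] [Module K M] [AddCommGroup N] [Module K N] [Fintype ι] [DecidableEq ι]
    (a : M [⋀^ι]→ₗ[K] N) :
    ∃ f : MultilinearMap K (fun _ : ι => M) N, alternatization f = a := by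
  refine ⟨(((Fintype.card ι).factorial : K)⁻¹ • a : M [⋀^ι]→ₗ[K] N), ?_⟩
  rw [coe_alternatization, ← Nat.cast_smul_eq_nsmul K, smul_smul,
    mul_inv_cancel₀ (Nat.cast_ne_zero.mpr (Nat.factorial_ne_zero _)), one_smul]

def Equiv.sumLeftComm (α β γ : Type*) : α ⊕ (β ⊕ γ) ≃ β ⊕ (α ⊕ γ) :=
  (Equiv.sumAssoc α β γ).symm.trans
    (((Equiv.sumComm α β).sumCongr (.refl γ)).trans (Equiv.sumAssoc β α γ))

theorem val_finRotate_pow_apply (n j : ℕ) (i : Fin n) :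
    ((finRotate n ^ j) i : ℕ) = (i + j) % n := by
  induction j with
  | zero => simp [Nat.mod_eq_of_lt i.2]
  | succ j ih =>
    obtain _ | n := n
    · exact i.elim0
    rw [pow_succ', Equiv.Perm.mul_apply, finRotate_apply, Fin.val_add, ih, Fin.val_one',
      ← Nat.add_mod, add_assoc]

theorem finAddFlip_trans_finCongr_eq_finRotate_pow (m n : ℕ) :
    finAddFlip.trans (finCongr (Nat.add_comm n m)) = finRotate (m + n) ^ n := by
  ext ⟨x, hx⟩
  simp only [val_finRotate_pow_apply, Equiv.trans_apply, finCongr_apply, Fin.val_cast]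
  rcases lt_or_ge x m with h | h
  · rw [finAddFlip_apply_mk_left h, Nat.mod_eq_of_lt (by omega), Fin.val_mk]
    omega
  · rw [finAddFlip_apply_mk_right h hx, Nat.mod_eq_sub_mod (by omega),
      Nat.mod_eq_of_lt (by omega), Fin.val_mk]
    omega

theorem sign_finAddFlip_trans_finCongr (m n : ℕ) :
    Equiv.Perm.sign (finAddFlip.trans (finCongr (Nat.add_comm n m)) : Equiv.Perm (Fin (m + n))) =
      (-1) ^ (m * n) := by
  rw [finAddFlip_trans_finCongr_eq_finRotate_pow, map_pow, sign_finRotate, ← pow_mul]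
  obtain _ | n := n
  · simp
  rw [show (m + (n + 1) - 1) * (n + 1) = m * (n + 1) + n * (n + 1) by
      rw [show m + (n + 1) - 1 = m + n by omega]; ring,
    pow_add, (Nat.even_mul_succ_self n).neg_one_pow, mul_one]

theorem sumAssoc_trans_finSumFinEquiv (k l p : ℕ) :
    (Equiv.sumAssoc (Fin k) (Fin l) (Fin p)).trans
        (((Equiv.refl _).sumCongr finSumFinEquiv).trans finSumFinEquiv) =
      ((finSumFinEquiv.sumCongr (.refl _)).trans finSumFinEquiv).trans
        (finCongr (Nat.add_assoc k l p)) := by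
  ext ((i | j) | c) <;> simp [Nat.add_assoc]

theorem sumLeftComm_trans_finSumFinEquiv (k l p : ℕ) :
    (Equiv.sumLeftComm (Fin l) (Fin k) (Fin p)).trans
        ((((Equiv.refl _).sumCongr finSumFinEquiv).trans finSumFinEquiv).trans
          ((finSumFinEquiv.trans (finCongr (Nat.add_assoc k l p))).permCongr
            ((finAddFlip.trans (finCongr (Nat.add_comm l k))).sumCongr (.refl (Fin p))))) =
      (((Equiv.refl _).sumCongr finSumFinEquiv).trans finSumFinEquiv).trans
        (finCongr (Nat.add_left_comm l k p)) := by
  ext (j | i | c) <;>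
    simp [Equiv.sumLeftComm, Equiv.permCongr_apply, ← Fin.castAdd_natAdd,
      ← Fin.castAdd_castAdd, Fin.natAdd_natAdd, add_comm]

namespace AlternatingMap

section

variable {R M N : Type*} [Semiring R] [AddCommMonoid M] [Module R M] [AddCommMonoid N]
  [Module R N]

theorem domDomCongr_finCongr_finCongr {m n o : ℕ} (f : M [⋀^Fin m]→ₗ[R] N) (h₁ : m = n)
    (h₂ : n = o) :
    (f.domDomCongr (finCongr h₁)).domDomCongr (finCongr h₂) =
      f.domDomCongr (finCongr (h₁.trans h₂)) :=
  rfl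

theorem domDomCongr_sumAssoc_finSumFinEquiv {k l p : ℕ}
    (f : M [⋀^(Fin k ⊕ Fin l) ⊕ Fin p]→ₗ[R] N) :
    (f.domDomCongr (Equiv.sumAssoc _ _ _)).domDomCongr
        (((Equiv.refl _).sumCongr finSumFinEquiv).trans finSumFinEquiv) =
      (f.domDomCongr ((finSumFinEquiv.sumCongr (.refl _)).trans finSumFinEquiv)).domDomCongr
        (finCongr (Nat.add_assoc k l p)) := by
  rw [← domDomCongr_trans, sumAssoc_trans_finSumFinEquiv, domDomCongr_trans]

end

theorem domDomCongr_sumLeftComm_finSumFinEquiv {R M N : Type*} [CommRing R] [AddCommMonoid M]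
    [Module R M] [AddCommGroup N] [Module R N] {k l p : ℕ}
    (f : M [⋀^Fin l ⊕ (Fin k ⊕ Fin p)]→ₗ[R] N) :
    (f.domDomCongr (Equiv.sumLeftComm _ _ _)).domDomCongr
        (((Equiv.refl _).sumCongr finSumFinEquiv).trans finSumFinEquiv) =
      (-1 : R) ^ (k * l) •
        (f.domDomCongr
          (((Equiv.refl _).sumCongr finSumFinEquiv).trans finSumFinEquiv)).domDomCongr
            (finCongr (Nat.add_left_comm l k p)) := by
  rw [← domDomCongr_trans _ (finCongr _), ← sumLeftComm_trans_finSumFinEquiv,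
    domDomCongr_trans (Equiv.sumLeftComm _ _ _), domDomCongr_trans _ (Equiv.permCongr _ _),
    domDomCongr_perm, Equiv.Perm.sign_permCongr, Equiv.Perm.sign_sumCongr,
    Equiv.Perm.sign_refl, mul_one, sign_finAddFlip_trans_finCongr, Units.smul_def,
    ← Int.cast_smul_eq_zsmul R, smul_smul]
  push_cast
  rw [← mul_pow, neg_one_mul, neg_neg, one_pow, one_smul]

end AlternatingMap

section LieDomCoprod

variable {V g : Type*} [AddCommGroup V] [Module ℝ V] [LieRing g] [LieAlgebra ℝ g]
  {ι κ μ : Type*}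

noncomputable def lieDomCoprod (a : MultilinearMap ℝ (fun _ : ι => V) g)
    (b : MultilinearMap ℝ (fun _ : κ => V) g) : MultilinearMap ℝ (fun _ : ι ⊕ κ => V) g :=
  (TensorProduct.lift (bracketBilin g)).compMultilinearMap (a.domCoprod b)

@[simp]
theorem lieDomCoprod_apply (a : MultilinearMap ℝ (fun _ : ι => V) g)
    (b : MultilinearMap ℝ (fun _ : κ => V) g) (x : ι ⊕ κ → V) :
    lieDomCoprod a b x = ⁅a fun i => x (Sum.inl i), b fun i => x (Sum.inr i)⁆ :=
  rfl

theorem lieDomCoprod_domDomCongr_left {ι' : Type*} (e : ι ≃ ι')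
    (a : MultilinearMap ℝ (fun _ : ι => V) g) (b : MultilinearMap ℝ (fun _ : κ => V) g) :
    lieDomCoprod (a.domDomCongr e) b = (lieDomCoprod a b).domDomCongr (e.sumCongr (.refl κ)) :=
  rfl

theorem lieDomCoprod_domDomCongr_right {κ' : Type*} (e : κ ≃ κ')
    (a : MultilinearMap ℝ (fun _ : ι => V) g) (b : MultilinearMap ℝ (fun _ : κ => V) g) :
    lieDomCoprod a (b.domDomCongr e) =
      (lieDomCoprod a b).domDomCongr ((Equiv.refl ι).sumCongr e) :=
  rfl

theorem lieDomCoprod_jacobi (a : MultilinearMap ℝ (fun _ : ι => V) g)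
    (b : MultilinearMap ℝ (fun _ : κ => V) g) (c : MultilinearMap ℝ (fun _ : μ => V) g) :
    (lieDomCoprod (lieDomCoprod a b) c).domDomCongr (Equiv.sumAssoc ι κ μ) +
        (lieDomCoprod b (lieDomCoprod a c)).domDomCongr (Equiv.sumLeftComm κ ι μ) =
      lieDomCoprod a (lieDomCoprod b c) := by
  ext x
  simp only [add_apply, MultilinearMap.domDomCongr_apply, lieDomCoprod_apply]
  rw [lie_lie]
  exact sub_add_cancel _ _

variable {k l p : ℕ}

theorem bwedge_alternatization (a : MultilinearMap ℝ (fun _ : Fin k => V) g)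
    (b : MultilinearMap ℝ (fun _ : Fin l => V) g) :
    bwedge (alternatization a) (alternatization b) =
      (alternatization (lieDomCoprod a b)).domDomCongr finSumFinEquiv := by
  rw [bwedge, ← MultilinearMap.domCoprod_alternization,
    ← LinearMap.compMultilinearMap_alternatization]
  rfl

theorem bwedge_bwedge_alternatization (a : MultilinearMap ℝ (fun _ : Fin k => V) g)
    (b : MultilinearMap ℝ (fun _ : Fin l => V) g)
    (c : MultilinearMap ℝ (fun _ : Fin p => V) g) :
    bwedge (bwedge (alternatization a) (alternatization b)) (alternatization c) =
      (alternatization (lieDomCoprod (lieDomCoprod a b) c)).domDomCongr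
        ((finSumFinEquiv.sumCongr (.refl _)).trans finSumFinEquiv) := by
  rw [bwedge_alternatization, ← MultilinearMap.alternatization_domDomCongr,
    bwedge_alternatization, lieDomCoprod_domDomCongr_left,
    MultilinearMap.alternatization_domDomCongr, AlternatingMap.domDomCongr_trans]

theorem bwedge_alternatization_bwedge (a : MultilinearMap ℝ (fun _ : Fin k => V) g)
    (b : MultilinearMap ℝ (fun _ : Fin l => V) g)
    (c : MultilinearMap ℝ (fun _ : Fin p => V) g) :
    bwedge (alternatization a) (bwedge (alternatization b) (alternatization c)) =
      (alternatization (lieDomCoprod a (lieDomCoprod b c))).domDomCongr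
        (((Equiv.refl _).sumCongr finSumFinEquiv).trans finSumFinEquiv) := by
  rw [bwedge_alternatization, ← MultilinearMap.alternatization_domDomCongr,
    bwedge_alternatization, lieDomCoprod_domDomCongr_right,
    MultilinearMap.alternatization_domDomCongr, AlternatingMap.domDomCongr_trans]

end LieDomCoprod

/-- The graded Jacobi identity:
`[[u ∧ v] ∧ w] + (-1)^(k*l) [v ∧ [u ∧ w]] = [u ∧ [v ∧ w]]`, with all index types
identified with `Fin (k + l + p)` along the canonical equivalences. -/
theorem bwedge_graded_jacobi {V g : Type*} [AddCommGroup V] [Module ℝ V]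
    [LieRing g] [LieAlgebra ℝ g] {k l p : ℕ}
    (u : AlternatingMap ℝ V g (Fin k)) (v : AlternatingMap ℝ V g (Fin l))
    (w : AlternatingMap ℝ V g (Fin p)) :
    bwedge (bwedge u v) w +
      ((-1 : ℝ) ^ (k * l)) •
        ((bwedge v (bwedge u w)).domDomCongr
          (finCongr (by omega : l + (k + p) = k + l + p))) =
    (bwedge u (bwedge v w)).domDomCongr
      (finCongr (by omega : k + (l + p) = k + l + p)) := by
  obtain ⟨a, rfl⟩ := u.exists_alternatization_eq
  obtain ⟨b, rfl⟩ := v.exists_alternatization_eq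
  obtain ⟨c, rfl⟩ := w.exists_alternatization_eq
  rw [bwedge_bwedge_alternatization, bwedge_alternatization_bwedge,
    bwedge_alternatization_bwedge, ← lieDomCoprod_jacobi a b c, map_add,
    AlternatingMap.domDomCongr_add, AlternatingMap.domDomCongr_add,
    MultilinearMap.alternatization_domDomCongr, MultilinearMap.alternatization_domDomCongr,
    AlternatingMap.domDomCongr_sumAssoc_finSumFinEquiv,
    AlternatingMap.domDomCongr_sumLeftComm_finSumFinEquiv, AlternatingMap.domDomCongr_smul,
    AlternatingMap.domDomCongr_finCongr_finCongr, AlternatingMap.domDomCongr_finCongr_finCongr,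
    finCongr_refl, AlternatingMap.domDomCongr_refl]
end

section
/- Let V be a finite-dimensional real vector space and g a real Lie algebra. For every alternating 1-linear map A from V to g, the identity [A ∧ [A ∧ A]] = 0 holds as an equality of alternating 3-linear maps from V to g, with index types identified along the canonical equivalences. -/
open scoped TensorProduct

/-!
For a `1`-form `u`, the cosets of `Perm (Fin 1) × Perm (Fin l)` in `Perm (Fin 1 ⊕ Fin l)` are
represented by the transpositions `swap (inl 0) i`, so `[u ∧ v]` is a signed sum over the slot `i`
that `u` receives. Expanding `[A ∧ [A ∧ A]]` on `(x₀, x₁, x₂)` this way gives twice the Jacobiator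
of `A x₀, A x₁, A x₂`.
-/

open Equiv

namespace Equiv.Perm.ModSumCongr

variable {ι κ : Type*} [Unique ι] [Finite κ]

theorem mk_eq_mk_iff {σ τ : Perm (ι ⊕ κ)} :
    (Quotient.mk'' σ : ModSumCongr ι κ) = Quotient.mk'' τ ↔
      σ (Sum.inl default) = τ (Sum.inl default) := by
  rw [Quotient.eq'', QuotientGroup.leftRel_apply]
  constructor
  · rintro ⟨⟨p, q⟩, hpq⟩
    have hfix := congrArg (· (Sum.inl default)) hpq
    simp only [sumCongrHom_apply, Perm.sumCongr_apply, Sum.map_inl, Unique.eq_default (p _),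
      Perm.mul_apply, Perm.inv_def] at hfix
    exact (eq_symm_apply σ).mp hfix
  · intro h
    apply mem_sumCongrHom_range_of_perm_mapsTo_inl
    rintro _ ⟨i, rfl⟩
    exact ⟨default, by simpa [Unique.eq_default i] using (eq_symm_apply σ).mpr h⟩

variable [DecidableEq ι] [DecidableEq κ]

theorem mk_swap_bijective :
    Function.Bijective fun i : ι ⊕ κ =>
      (Quotient.mk'' (swap (Sum.inl default) i) : ModSumCongr ι κ) := by
  refine ⟨fun i j h => ?_, fun σ => ?_⟩
  · simpa using mk_eq_mk_iff.mp h
  · induction σ using Quotient.inductionOn' with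
    | h σ => exact ⟨σ (Sum.inl default), mk_eq_mk_iff.mpr (swap_apply_left _ _)⟩

end Equiv.Perm.ModSumCongr

namespace AlternatingMap

variable {ι κ R M N₁ N₂ : Type*} [Fintype ι] [Unique ι] [DecidableEq ι] [Fintype κ]
  [DecidableEq κ] [CommSemiring R] [AddCommMonoid M] [Module R M] [AddCommGroup N₁]
  [Module R N₁] [AddCommGroup N₂] [Module R N₂]

theorem domCoprod_apply_of_unique (a : M [⋀^ι]→ₗ[R] N₁) (b : M [⋀^κ]→ₗ[R] N₂)
    (v : ι ⊕ κ → M) :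
    a.domCoprod b v = ∑ i : ι ⊕ κ, Perm.sign (swap (Sum.inl default) i) •
      (a (fun j => v (swap (Sum.inl default) i (Sum.inl j))) ⊗ₜ
        b (fun j => v (swap (Sum.inl default) i (Sum.inr j)))) := by
  rw [domCoprod_apply, sum_apply]
  exact (Fintype.sum_bijective _ Perm.ModSumCongr.mk_swap_bijective _ _ fun _ => rfl).symm

end AlternatingMap

section

variable {V g : Type*} [AddCommGroup V] [Module ℝ V] [LieRing g] [LieAlgebra ℝ g]

theorem bwedge_apply_of_fin_one {l : ℕ} (u : V [⋀^Fin 1]→ₗ[ℝ] g) (v : V [⋀^Fin l]→ₗ[ℝ] g)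
    (w : Fin (1 + l) → V) :
    bwedge u v w = ∑ i : Fin 1 ⊕ Fin l, Perm.sign (swap (Sum.inl 0) i) •
      ⁅u fun j => w (finSumFinEquiv (swap (Sum.inl 0) i (Sum.inl j))),
        v fun j => w (finSumFinEquiv (swap (Sum.inl 0) i (Sum.inr j)))⁆ := by
  rw [bwedge, AlternatingMap.domDomCongr_apply, LinearMap.compAlternatingMap_apply,
    AlternatingMap.domCoprod_apply_of_unique, map_sum]
  simp only [Units.smul_def, map_zsmul, TensorProduct.lift.tmul]
  rfl

theorem bwedge_one_one_apply (u v : V [⋀^Fin 1]→ₗ[ℝ] g) (w : Fin (1 + 1) → V) :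
    bwedge u v w = ⁅u ![w 0], v ![w 1]⁆ - ⁅u ![w 1], v ![w 0]⁆ := by
  rw [bwedge_apply_of_fin_one]
  simp only [Fintype.sum_sum_type, Fintype.sum_unique, Fin.default_eq_zero, swap_self,
    Perm.sign_swap', reduceCtorEq, if_true, if_false, one_smul, Units.neg_smul, ← sub_eq_add_neg]
  congr 2 <;> congr 2 <;> funext j <;> fin_cases j <;> rfl

theorem bwedge_one_two_apply (u : V [⋀^Fin 1]→ₗ[ℝ] g) (v : V [⋀^Fin (1 + 1)]→ₗ[ℝ] g)
    (w : Fin (1 + (1 + 1)) → V) :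
    bwedge u v w = ⁅u ![w 0], v ![w 1, w 2]⁆ - ⁅u ![w 1], v ![w 0, w 2]⁆
      - ⁅u ![w 2], v ![w 1, w 0]⁆ := by
  rw [bwedge_apply_of_fin_one]
  simp only [Fintype.sum_sum_type, Fintype.sum_unique, Fin.default_eq_zero, swap_self,
    Perm.sign_swap', reduceCtorEq, if_true, if_false, one_smul, Units.neg_smul, Fin.sum_univ_succ,
    ← sub_eq_add_neg]
  rw [← add_sub_assoc, ← sub_eq_add_neg]
  congr 2 <;> congr 2 <;> funext j <;> fin_cases j <;> rfl

end

theorem lie_lie_sub_lie_lie_sub_lie_lie_eq_zero {L : Type*} [LieRing L] (a b c : L) :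
    ⁅a, ⁅b, c⁆ - ⁅c, b⁆⁆ - ⁅b, ⁅a, c⁆ - ⁅c, a⁆⁆ - ⁅c, ⁅b, a⁆ - ⁅a, b⁆⁆ = 0 := calc
  _ = (2 : ℤ) • (⁅a, ⁅b, c⁆⁆ + ⁅b, ⁅c, a⁆⁆ + ⁅c, ⁅a, b⁆⁆) := by
    rw [← lie_skew b c, ← lie_skew c a, ← lie_skew a b]
    simp only [lie_sub, lie_neg]
    abel
  _ = 0 := by rw [lie_jacobi, smul_zero]

/-- The identity `[A ∧ [A ∧ A]] = 0` for a `g`-valued 1-form `A`, with index types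
identified with `Fin 3` along the canonical equivalences. This is the algebraic core
of the Bianchi identity `d_A F_A = 0`. -/
theorem bwedge_triple_self {V g : Type*} [AddCommGroup V] [Module ℝ V]
    [LieRing g] [LieAlgebra ℝ g]
    (A : AlternatingMap ℝ V g (Fin 1)) :
    (bwedge A (bwedge A A)).domDomCongr
      (finCongr (by omega : 1 + (1 + 1) = 3)) = 0 := by
  ext w
  rw [AlternatingMap.domDomCongr_apply, AlternatingMap.zero_apply, bwedge_one_two_apply,
    bwedge_one_one_apply, bwedge_one_one_apply, bwedge_one_one_apply]
  simp only [Matrix.cons_val_zero, Matrix.cons_val_one]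
  exact lie_lie_sub_lie_lie_sub_lie_lie_eq_zero _ _ _
end
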